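/- The halving map α : [0,2] → [0,1], x ↦ x/2, together with juxtaposition of intervals, makes the object 1 an idempotent object of the category whose objects are natural numbers and whose morphisms m → n are piecewise-linear dyadic bijections [0,m] → [0,n]; and every morphism φ : m → n of this category factorizes as φ = α_T ∘ α_S^{-1} for some p and forests S (with m roots, p leaves) and T (with n roots, p leaves). -/

import Mathlib

inductive BinTree : Type
  | leaf : BinTree
  | node : BinTree → BinTree → BinTree
deriving DecidableEq

/-- The number of leaves of a binary tree. -/
def BinTree.leaves : BinTree → ℕ
  | .leaf => 1
  | .node l r => l.leaves + r.leaves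

/-- Graft trees onto the leaves of a tree (left to right), threading the list:
returns the grafted tree together with the unused trees. -/
def BinTree.graftAux : BinTree → List BinTree → BinTree × List BinTree
  | .leaf, [] => (.leaf, [])
  | .leaf, t :: ts => (t, ts)
  | .node l r, ts =>
      ((BinTree.node (l.graftAux ts).1 ((r.graftAux (l.graftAux ts).2)).1),
        (r.graftAux (l.graftAux ts).2).2)

/-- Graft the trees of `ts` onto the leaves of `t`, in left-to-right order. -/
def BinTree.graft (t : BinTree) (ts : List BinTree) : BinTree := (t.graftAux ts).1

/-- `σ` is a subtree of `ρ` (sharing the same root) iff `ρ` is obtained from `σ`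
by grafting trees onto its leaves. -/
def BinTree.IsSubtree (σ ρ : BinTree) : Prop :=
  ∃ ts : List BinTree, ts.length = σ.leaves ∧ ρ = σ.graft ts

/-- `ω_i`: attach the two-leafed tree Y to the `i`-th leaf (0-indexed) of a tree. -/
def BinTree.expand : BinTree → ℕ → BinTree
  | .leaf, _ => .node .leaf .leaf
  | .node l r, i =>
      if i < l.leaves then .node (l.expand i) r else .node l (r.expand (i - l.leaves))

def IsDyadic (x : ℝ) : Prop := ∃ (a : ℤ) (b : ℕ), x = (a : ℝ) / 2 ^ b

/-- `f` restricts to a bijection `[0,m] → [0,n]` that is piecewise linear with finitely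
many pieces, slopes integer powers of `2`, and all breakpoints at dyadic rational
coordinates: a morphism `m ⟶ n` of the category `𝒜`. -/
def DyadicPL (m n : ℕ) (f : ℝ → ℝ) : Prop :=
  Set.BijOn f (Set.Icc 0 m) (Set.Icc 0 n) ∧
  ∃ (N : ℕ) (pts : Fin (N + 1) → ℝ), StrictMono pts ∧
    pts 0 = 0 ∧ pts (Fin.last N) = m ∧
    (∀ i, IsDyadic (pts i) ∧ IsDyadic (f (pts i))) ∧
    ∀ i : Fin N, ∃ k : ℤ, ∀ x ∈ Set.Icc (pts i.castSucc) (pts i.succ),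
      f x = f (pts i.castSucc) + (2 : ℝ) ^ k * (x - pts i.castSucc)

/-- The map `[0,m] → [0,1]` induced by an `m`-leafed binary tree, built from halving
and juxtaposition. -/
noncomputable def treeMap : BinTree → ℝ → ℝ
  | .leaf => fun x => x
  | .node l r => fun x =>
      if x ≤ (l.leaves : ℝ) then treeMap l x / 2
      else treeMap r (x - l.leaves) / 2 + 1 / 2

/-- The map `α_T : [0,p] → [0,k]` induced by a forest `T` with `p` leaves and `k`
roots, by juxtaposition of the tree maps. -/
noncomputable def forestMap : List BinTree → ℝ → ℝ
  | [] => fun x => x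
  | t :: ts => fun x =>
      if x ≤ (t.leaves : ℝ) then treeMap t x else forestMap ts (x - t.leaves) + 1

/-!
Rescaling the source by a large power of two, `x ↦ f (x / 2 ^ N)` maps every unit interval
`[c, c + 1]` affinely onto a standard dyadic interval `[s / 2 ^ d, (s + 1) / 2 ^ d]`. Such a map
`[0, p] → [0, 1]` is a tree map: for `p > 1` no piece has slope `1`, so every image interval has
length at most `1 / 2`, the point `1 / 2` is the image of an integer, and doubling the two halves
gives two smaller maps of the same kind. Cutting `[0, p]` at the preimages of the integers gives
the forest `T`; the forest `S` is the one of the rescaling `x ↦ x / 2 ^ N` itself.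
-/

open Set Filter

/-- On each unit interval `[c, c + 1] ⊆ [0, p]`, `g` is the increasing affine bijection onto the
standard dyadic interval `[s / 2 ^ d, (s + 1) / 2 ^ d]`, where `s = c + t`. -/
def IsStdDyadicOn (p : ℕ) (g : ℝ → ℝ) : Prop :=
  ∀ c : ℕ, c < p →
    ∃ (d : ℕ) (t : ℤ), ∀ x ∈ Icc (c : ℝ) (c + 1), g x = (x + t) / 2 ^ d

theorem MonotoneOn.endpoints_of_bijOn_Icc {α β : Type*} [Preorder α] [PartialOrder β]
    {f : α → β} {a b : α} {c d : β} (hf : MonotoneOn f (Icc a b))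
    (hbij : BijOn f (Icc a b) (Icc c d)) (hab : a ≤ b) : f a = c ∧ f b = d := by
  have ha := left_mem_Icc.2 hab
  have hb := right_mem_Icc.2 hab
  have hcd : c ≤ d := (hbij.mapsTo ha).1.trans (hbij.mapsTo ha).2
  obtain ⟨x, hx, hxc⟩ := hbij.surjOn (left_mem_Icc.2 hcd)
  obtain ⟨y, hy, hyd⟩ := hbij.surjOn (right_mem_Icc.2 hcd)
  exact ⟨le_antisymm (hxc ▸ hf ha hx hx.1) (hbij.mapsTo ha).1,
    le_antisymm (hbij.mapsTo hb).2 (hyd ▸ hf hy hb hy.2)⟩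

theorem eqOn_Icc_ite {β : Type*} {F G g : ℝ → β} {b p : ℝ} (hF : EqOn F g (Icc 0 b))
    (hG : EqOn G (fun x => g (x + b)) (Icc 0 (p - b))) :
    EqOn (fun x => if x ≤ b then F x else G (x - b)) g (Icc 0 p) := by
  intro x hx
  by_cases hxb : x ≤ b
  · simpa only [if_pos hxb] using hF ⟨hx.1, hxb⟩
  · simpa only [if_neg hxb, sub_add_cancel] using
      hG (x := x - b) ⟨by linarith [not_le.1 hxb], by linarith [hx.2]⟩

namespace IsStdDyadicOn

variable {p : ℕ} {g : ℝ → ℝ}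

theorem mono {q : ℕ} (hg : IsStdDyadicOn p g) (hqp : q ≤ p) : IsStdDyadicOn q g :=
  fun c hc => hg c (hc.trans_le hqp)

theorem comp_add_sub (hg : IsStdDyadicOn p g) (b : ℕ) (k : ℤ) :
    IsStdDyadicOn (p - b) (fun x => g (x + b) - k) := by
  intro c hc
  obtain ⟨d, t, h⟩ := hg (c + b) (by omega)
  refine ⟨d, t + b - k * 2 ^ d, fun x hx => ?_⟩
  beta_reduce
  rw [h (x + b) (by push_cast; constructor <;> linarith [hx.1, hx.2])]
  push_cast
  field_simp
  ring

theorem strictMonoOn (hg : IsStdDyadicOn p g) : StrictMonoOn g (Icc 0 p) := by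
  induction p with
  | zero => simp
  | succ p ih =>
    obtain ⟨d, t, h⟩ := hg p p.lt_succ_self
    have hpiece : StrictMonoOn g (Icc (p : ℝ) (p + 1)) := fun x hx y hy hxy => by
      rw [h x hx, h y hy]
      gcongr
    have hp : (0 : ℝ) ≤ p := p.cast_nonneg
    rw [Nat.cast_succ, ← Icc_union_Icc_eq_Icc hp (by linarith)]
    exact (ih (hg.mono p.le_succ)).union hpiece (isGreatest_Icc hp) (isLeast_Icc (by linarith))

theorem exists_eq_intCast (hg : IsStdDyadicOn p g) {k : ℤ} (h0 : g 0 ≤ k) (hp : k ≤ g p) :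
    ∃ c ≤ p, g c = k := by
  induction p with
  | zero => exact ⟨0, le_rfl, by simpa using le_antisymm h0 (by simpa using hp)⟩
  | succ p ih =>
    by_cases hk : k ≤ g p
    · obtain ⟨c, hc, hgc⟩ := ih (hg.mono p.le_succ) hk
      exact ⟨c, hc.trans p.le_succ, hgc⟩
    refine ⟨p + 1, le_rfl, ?_⟩
    obtain ⟨d, t, h⟩ := hg p p.lt_succ_self
    rw [h p ⟨le_rfl, by linarith⟩, not_le, div_lt_iff₀ (by positivity)] at hk
    rw [Nat.cast_succ, h (p + 1) ⟨by linarith, le_rfl⟩, le_div_iff₀ (by positivity)] at hp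
    -- `k * 2 ^ d` is an integer in `(p + t, p + 1 + t]`
    have hk' : (p + t : ℤ) < k * 2 ^ d := by exact_mod_cast hk
    have hp' : k * 2 ^ d ≤ (p + 1 + t : ℤ) := by exact_mod_cast hp
    rw [Nat.cast_succ, h (p + 1) ⟨by linarith, le_rfl⟩, div_eq_iff (by positivity)]
    exact_mod_cast (by omega : (p + 1 + t : ℤ) = k * 2 ^ d)

theorem two_mul (hg : IsStdDyadicOn p g) (hp : 1 < p) (h0 : g 0 = 0) (h1 : g p = 1) :
    IsStdDyadicOn p (fun x => 2 * g x) := by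
  intro c hc
  obtain ⟨d, t, h⟩ := hg c hc
  obtain _ | d := d
  · -- a piece of slope `1` would be mapped onto all of `[0, 1] = g '' [0, p]`, forcing `p = 1`
    exfalso
    have hmono := hg.strictMonoOn
    have hc0 : (c : ℝ) ∈ Icc 0 (p : ℝ) := ⟨c.cast_nonneg, by exact_mod_cast hc.le⟩
    have hc1 : (c : ℝ) + 1 ∈ Icc 0 (p : ℝ) :=
      ⟨by positivity, by exact_mod_cast Nat.succ_le_of_lt hc⟩
    have h0p : (0 : ℝ) ∈ Icc 0 (p : ℝ) := ⟨le_rfl, p.cast_nonneg⟩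
    have hpp : (p : ℝ) ∈ Icc 0 (p : ℝ) := ⟨p.cast_nonneg, le_rfl⟩
    have hstep : g (c + 1) = g c + 1 := by
      rw [h c ⟨le_rfl, by linarith⟩, h (c + 1) ⟨by linarith, le_rfl⟩]
      ring
    have hlo := hmono.monotoneOn h0p hc0 c.cast_nonneg
    have hhi := hmono.monotoneOn hc1 hpp hc1.2
    have hc_eq : (c : ℝ) = 0 := hmono.injOn hc0 h0p (by linarith)
    have hc1_eq : (c : ℝ) + 1 = p := hmono.injOn hc1 hpp (by linarith)
    have : (p : ℝ) = 1 := by linarith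
    exact hp.ne' (by exact_mod_cast this)
  · exact ⟨d, t, fun x hx => by beta_reduce; rw [h x hx, pow_succ]; field_simp⟩

theorem exists_tree (hg : IsStdDyadicOn p g) (h0 : g 0 = 0) (h1 : g p = 1) :
    ∃ t : BinTree, t.leaves = p ∧ EqOn (treeMap t) g (Icc 0 p) := by
  induction p using Nat.strong_induction_on generalizing g with
  | _ p ih =>
  rcases Nat.lt_trichotomy p 1 with hp | rfl | hp
  · obtain rfl : p = 0 := by omega
    norm_num [h0] at h1
  · rw [Nat.cast_one] at h1
    obtain ⟨d, t, h⟩ := hg 0 one_pos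
    have ht : (t : ℝ) / 2 ^ d = 0 := by simpa [h0] using (h 0 (by simp)).symm
    have hd : (1 + t : ℝ) / 2 ^ d = 1 := by simpa [h1] using (h 1 (by simp)).symm
    rw [div_eq_zero_iff] at ht
    refine ⟨.leaf, rfl, fun x hx => ?_⟩
    rw [treeMap, h x (by simpa using hx)]
    simp_all
  · have h2g := hg.two_mul hp h0 h1
    obtain ⟨b, hbp, hb⟩ := h2g.exists_eq_intCast (k := 1) (by simp [h0]) (by simp [h1])
    rw [Int.cast_one] at hb
    have hb0 : b ≠ 0 := by rintro rfl; norm_num [h0] at hb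
    have hbp' : b < p := lt_of_le_of_ne hbp (by rintro rfl; norm_num [h1] at hb)
    obtain ⟨tL, hL, hLeq⟩ := ih b hbp' (h2g.mono hbp) (by simp [h0]) (by simpa using hb)
    obtain ⟨tR, hR, hReq⟩ := ih (p - b) (by omega) (h2g.comp_add_sub b 1) (by simp [hb])
      (by simp [Nat.cast_sub hbp, h1]; norm_num)
    refine ⟨.node tL tR, by simp only [BinTree.leaves, hL, hR, Nat.add_sub_cancel' hbp], ?_⟩
    have := eqOn_Icc_ite (F := fun x => treeMap tL x / 2) (G := fun x => treeMap tR x / 2 + 1 / 2)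
      (g := g) (b := b) (p := p) (fun x hx => by simp [hLeq hx])
      (fun x hx => by rw [← Nat.cast_sub hbp] at hx; simp [hReq hx]; ring)
    simpa [treeMap, hL] using this

theorem exists_forest_eqOn {n : ℕ} (hg : IsStdDyadicOn p g) (h0 : g 0 = 0) (hp : g p = n) :
    ∃ T : List BinTree, T.length = n ∧ (T.map BinTree.leaves).sum = p ∧
      EqOn (forestMap T) g (Icc 0 p) := by
  induction n generalizing p g with
  | zero =>
    obtain rfl : p = 0 := by
      have := hg.strictMonoOn.injOn ⟨p.cast_nonneg, le_rfl⟩ ⟨le_rfl, p.cast_nonneg⟩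
        (by rw [hp, h0, Nat.cast_zero])
      exact_mod_cast this
    refine ⟨[], rfl, rfl, fun x hx => ?_⟩
    obtain rfl : x = 0 := by simpa using hx
    simp [forestMap, h0]
  | succ n ih =>
    obtain ⟨b, hbp, hb⟩ := hg.exists_eq_intCast (k := 1) (by simp [h0]) (by simp [hp])
    rw [Int.cast_one] at hb
    obtain ⟨t, ht, hteq⟩ := (hg.mono hbp).exists_tree h0 hb
    obtain ⟨T, hT, hTsum, hTeq⟩ := ih (hg.comp_add_sub b 1) (by simp [hb])
      (by simp [Nat.cast_sub hbp, hp])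
    refine ⟨t :: T, by simp [hT], by simp [ht, hTsum, Nat.add_sub_cancel' hbp], ?_⟩
    have := eqOn_Icc_ite (F := treeMap t) (G := fun x => forestMap T x + 1)
      (g := g) (b := b) (p := p) hteq
      (fun x hx => by rw [← Nat.cast_sub hbp] at hx; simp [hTeq hx])
    simpa [forestMap, ht] using this

theorem dyadicPL {n : ℕ} {F : ℝ → ℝ} (hg : IsStdDyadicOn p g) (h0 : g 0 = 0)
    (hbij : BijOn g (Icc 0 p) (Icc 0 n)) (hF : EqOn F g (Icc 0 p)) : DyadicPL p n F := by
  have hmem {x : ℕ} (hx : x ≤ p) : (x : ℝ) ∈ Icc 0 (p : ℝ) :=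
    ⟨x.cast_nonneg, by exact_mod_cast hx⟩
  refine ⟨hbij.congr hF.symm, p, fun i => i, fun i j hij => by simpa using hij, by simp, by simp,
    fun i => ⟨⟨i, 0, by simp⟩, ?_⟩, fun i => ?_⟩
  · rw [hF (hmem i.is_le)]
    obtain ⟨_ | c, hc⟩ := i
    · exact ⟨0, 0, by simp [h0]⟩
    obtain ⟨d, t, h⟩ := hg c (by omega)
    rw [h _ ⟨by push_cast; linarith, by push_cast; linarith⟩]
    exact ⟨c + 1 + t, d, by push_cast; ring⟩
  · obtain ⟨d, t, h⟩ := hg i i.isLt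
    refine ⟨-d, fun x hx => ?_⟩
    simp only [Fin.val_castSucc, Fin.val_succ, Nat.cast_add, Nat.cast_one] at hx ⊢
    have hx' : x ∈ Icc 0 (p : ℝ) :=
      ⟨i.1.cast_nonneg.trans hx.1, hx.2.trans (by exact_mod_cast i.isLt)⟩
    rw [hF hx', hF (hmem i.isLt.le), h x hx, h i ⟨le_rfl, by linarith⟩, zpow_neg, zpow_natCast]
    field_simp
    ring

theorem exists_forest {n : ℕ} (hg : IsStdDyadicOn p g) (hbij : BijOn g (Icc 0 p) (Icc 0 n)) :
    ∃ T : List BinTree, T.length = n ∧ (T.map BinTree.leaves).sum = p ∧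
      DyadicPL p n (forestMap T) ∧ EqOn (forestMap T) g (Icc 0 p) := by
  obtain ⟨h0, hp⟩ := hg.strictMonoOn.monotoneOn.endpoints_of_bijOn_Icc hbij p.cast_nonneg
  obtain ⟨T, hlen, hsum, hT⟩ := hg.exists_forest_eqOn h0 hp
  exact ⟨T, hlen, hsum, hg.dyadicPL h0 hbij hT, hT⟩

end IsStdDyadicOn

theorem isStdDyadicOn_div_two_pow (p N : ℕ) : IsStdDyadicOn p (fun x => x / 2 ^ N) :=
  fun _ _ => ⟨N, 0, fun _ _ => by simp⟩

theorem bijOn_div_Icc_zero {K : Type*} [Field K] [LinearOrder K] [IsStrictOrderedRing K] {a b : K}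
    (ha : 0 < a) :
    BijOn (fun x => x / a) (Icc 0 b) (Icc 0 (b / a)) := by
  have := (OrderIso.divRight₀ a ha).injective.injOn.bijOn_image (s := Icc 0 b)
  rwa [OrderIso.image_Icc, OrderIso.divRight₀_apply, OrderIso.divRight₀_apply, zero_div] at this

theorem dyadicPL_div_two_zpow {m n : ℕ} (k : ℤ) (hm : 0 < m) (hmn : (m : ℝ) = 2 ^ k * n) :
    DyadicPL m n (fun x => x / 2 ^ k) := by
  have hn : (m : ℝ) / 2 ^ k = n := by rw [hmn]; field_simp
  refine ⟨by simpa [hn] using bijOn_div_Icc_zero (b := (m : ℝ)) (zpow_pos two_pos k),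
    1, ![0, m], ?_, rfl, rfl, ?_, fun _ => ⟨-k, fun x _ => ?_⟩⟩
  · simpa [Fin.strictMono_iff_lt_succ] using hm
  · intro i
    fin_cases i
    · exact ⟨⟨0, 0, by simp⟩, ⟨0, 0, by simp⟩⟩
    · exact ⟨⟨m, 0, by simp⟩, ⟨n, 0, by simp [hn]⟩⟩
  · rw [zpow_neg]
    ring

theorem IsDyadic.eventually_mul_two_pow_eq_intCast {x : ℝ} (hx : IsDyadic x) :
    ∀ᶠ N : ℕ in atTop, ∃ z : ℤ, x * 2 ^ N = z := by
  obtain ⟨a, e, rfl⟩ := hx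
  filter_upwards [eventually_ge_atTop e] with N hN
  refine ⟨a * 2 ^ (N - e), ?_⟩
  rw [← Nat.sub_add_cancel hN, pow_add, Nat.add_sub_cancel]
  push_cast
  field_simp

theorem IsDyadic.eventually_mul_two_pow_sub_eq_intCast {y : ℝ} (hy : IsDyadic y) (k : ℤ) :
    ∀ᶠ N : ℕ in atTop, ∃ d : ℕ, (N : ℤ) = k + d ∧ ∃ z : ℤ, y * 2 ^ d = z := by
  obtain ⟨e, he⟩ := eventually_atTop.1 hy.eventually_mul_two_pow_eq_intCast
  filter_upwards [eventually_ge_atTop (e + k.toNat)] with N hN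
  exact ⟨(N - k).toNat, by omega, he _ (by omega)⟩

theorem Fin.exists_castSucc_le_lt_succ {α : Type*} [LinearOrder α] {K : ℕ}
    (v : Fin (K + 1) → α) {x : α} (h0 : v 0 ≤ x) (hK : x < v (Fin.last K)) :
    ∃ i : Fin K, v i.castSucc ≤ x ∧ x < v i.succ := by
  induction K with
  | zero => exact absurd (h0.trans_lt hK) (lt_irrefl _)
  | succ K ih =>
    by_cases hx : x < v (Fin.last K).castSucc
    · obtain ⟨i, hi⟩ := ih (v ∘ Fin.castSucc) h0 hx
      exact ⟨i.castSucc, hi⟩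
    · exact ⟨Fin.last K, not_lt.1 hx, hK⟩

theorem exists_stdDyadic_piece_of_affine {f : ℝ → ℝ} {a b : ℝ} {k : ℤ} {N d c : ℕ}
    (hNk : (N : ℤ) = k + d) (ha : ∃ z : ℤ, a * 2 ^ N = z) (hb : ∃ z : ℤ, b * 2 ^ N = z)
    (hfa : ∃ z : ℤ, f a * 2 ^ d = z) (hac : a ≤ c / 2 ^ N) (hcb : c / 2 ^ N < b)
    (hf : ∀ x ∈ Icc a b, f x = f a + 2 ^ k * (x - a)) :
    ∃ (d : ℕ) (t : ℤ), ∀ x ∈ Icc (c : ℝ) (c + 1), f (x / 2 ^ N) = (x + t) / 2 ^ d := by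
  obtain ⟨za, hza⟩ := ha
  obtain ⟨zb, hzb⟩ := hb
  obtain ⟨zf, hzf⟩ := hfa
  have h2N : (0 : ℝ) < 2 ^ N := by positivity
  have hsplit : (2 : ℝ) ^ N = 2 ^ k * 2 ^ d := by
    rw [← zpow_natCast, hNk, zpow_add₀ two_ne_zero, zpow_natCast]
  -- `b` lies on the grid `2⁻ᴺ ℤ` beyond `c / 2 ^ N`, hence at or beyond `(c + 1) / 2 ^ N`
  have hcb' : (c : ℝ) + 1 ≤ zb := by
    rw [div_lt_iff₀ h2N, hzb] at hcb
    have : (c : ℤ) < zb := by exact_mod_cast hcb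
    exact_mod_cast Int.add_one_le_of_lt this
  refine ⟨d, zf - za, fun x hx => ?_⟩
  have hxa : a ≤ x / 2 ^ N := hac.trans (by gcongr; exact hx.1)
  have hxb : x / 2 ^ N ≤ b := by
    rw [div_le_iff₀ h2N, hzb]
    exact hx.2.trans hcb'
  rw [hf _ ⟨hxa, hxb⟩]
  push_cast
  rw [← hzf, ← hza, hsplit]
  field_simp
  ring

theorem DyadicPL.exists_isStdDyadicOn_comp_div_two_pow {m n : ℕ} {f : ℝ → ℝ}
    (hf : DyadicPL m n f) : ∃ N : ℕ, IsStdDyadicOn (m * 2 ^ N) (fun x => f (x / 2 ^ N)) := by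
  obtain ⟨-, K, pts, -, h0, hlast, hdy, hlin⟩ := hf
  choose k hk using hlin
  obtain ⟨N, hpts, hval⟩ :=
    ((eventually_all.2 fun i => (hdy i).1.eventually_mul_two_pow_eq_intCast).and
      (eventually_all.2 fun i : Fin K =>
        (hdy i.castSucc).2.eventually_mul_two_pow_sub_eq_intCast (k i))).exists
  refine ⟨N, fun c hc => ?_⟩
  obtain ⟨i, hci, hci'⟩ := Fin.exists_castSucc_le_lt_succ pts (x := c / 2 ^ N)
    (by rw [h0]; positivity) (by rw [hlast, div_lt_iff₀ (by positivity)]; exact_mod_cast hc)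
  obtain ⟨d, hd, hfd⟩ := hval i
  exact exists_stdDyadic_piece_of_affine hd (hpts _) (hpts _) hfd hci hci' (hk i)

/-- The halving map `α : [0,2] → [0,1]` is a morphism `2 ⟶ 1` of the category of
piecewise-linear dyadic bijections and is invertible, making the object `1` (with
juxtaposition as tensor) an idempotent object; moreover every morphism `φ : m ⟶ n` of
this category factorizes as `φ = α_T ∘ α_S⁻¹` for some `p` and forests `S` (with `m`
roots and `p` leaves) and `T` (with `n` roots and `p` leaves). -/
theorem dyadicPL_idempotent_and_factorization :
    DyadicPL 2 1 (fun x => x / 2) ∧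
    (∃ g : ℝ → ℝ, DyadicPL 1 2 g ∧
      (∀ x ∈ Set.Icc (0 : ℝ) 2, g (x / 2) = x) ∧
      (∀ y ∈ Set.Icc (0 : ℝ) 1, g y / 2 = y)) ∧
    (∀ (m n : ℕ) (f : ℝ → ℝ), DyadicPL m n f →
      ∃ (p : ℕ) (S T : List BinTree),
        S.length = m ∧ (S.map BinTree.leaves).sum = p ∧
        T.length = n ∧ (T.map BinTree.leaves).sum = p ∧
        DyadicPL p m (forestMap S) ∧ DyadicPL p n (forestMap T) ∧
        ∀ x ∈ Set.Icc (0 : ℝ) p, f (forestMap S x) = forestMap T x) := by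
  refine ⟨by simpa using dyadicPL_div_two_zpow (m := 2) (n := 1) 1 two_pos (by norm_num),
    ⟨fun y => y / 2 ^ (-1 : ℤ), dyadicPL_div_two_zpow (-1) one_pos (by norm_num),
      fun x _ => by simp, fun y _ => by simp⟩, fun m n f hf => ?_⟩
  obtain ⟨N, hN⟩ := hf.exists_isStdDyadicOn_comp_div_two_pow
  have hscale :
      BijOn (fun x : ℝ => x / 2 ^ N) (Icc 0 ((m * 2 ^ N : ℕ) : ℝ)) (Icc 0 (m : ℝ)) := by
    simpa using
      bijOn_div_Icc_zero (b := ((m * 2 ^ N : ℕ) : ℝ)) (by positivity : (0 : ℝ) < 2 ^ N)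
  obtain ⟨S, hSlen, hSsum, hS, hSeq⟩ := (isStdDyadicOn_div_two_pow _ N).exists_forest hscale
  obtain ⟨T, hTlen, hTsum, hT, hTeq⟩ := hN.exists_forest (hf.1.comp hscale)
  exact ⟨m * 2 ^ N, S, T, hSlen, hSsum, hTlen, hTsum, hS, hT,
    fun x hx => by rw [hSeq hx, hTeq hx]⟩
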